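/- arXiv:1206.1639 — 6 statements merged into one kernel-verified Lean document; each statement's English description precedes it below -/
import Mathlib

section
/- Let N ≥ 1 be an integer, let b ∈ ℂ be nonzero, and set y = b + b⁻¹. Then the set of complex numbers x satisfying T_N(x) = y is exactly the set { a + a⁻¹ : a ∈ ℂ, a^N = b }, i.e. the numbers a + a⁻¹ as a ranges over all N-th roots of b. -/
lemma exists_add_inv (x : ℂ) : ∃ a : ℂ, a ≠ 0 ∧ a + a⁻¹ = x := by
  obtain ⟨a, ha⟩ := IsAlgClosed.exists_root (Polynomial.X ^ 2 - Polynomial.C x * Polynomial.X + 1 : Polynomial ℂ)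
    (by
      have : (Polynomial.X ^ 2 - Polynomial.C x * Polynomial.X + 1 : Polynomial ℂ).degree = 2 := by
        compute_degree!
      rw [this]; norm_num)
  simp only [Polynomial.IsRoot, Polynomial.eval_add, Polynomial.eval_sub, Polynomial.eval_pow,
    Polynomial.eval_mul, Polynomial.eval_C, Polynomial.eval_X, Polynomial.eval_one] at ha
  have ha0 : a ≠ 0 := by
    rintro rfl; simp at ha
  refine ⟨a, ha0, ?_⟩
  field_simp
  linear_combination ha

lemma add_inv_inj {u v : ℂ} (hu : u ≠ 0) (hv : v ≠ 0) (h : u + u⁻¹ = v + v⁻¹) :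
    u = v ∨ u = v⁻¹ := by
  have h' : (u - v) * (u * v - 1) = 0 := by
    field_simp at h
    linear_combination h
  rcases mul_eq_zero.mp h' with h1 | h1
  · left; exact sub_eq_zero.mp h1
  · right
    field_simp
    linear_combination h1

/-- For `N ≥ 1` and `b ≠ 0`, setting `y = b + b⁻¹`, the set of solutions `x` of
`T_N(x) = y` (where `T_N` is the `N`-th normalized Chebyshev polynomial, i.e. the
Dickson polynomial of the first kind with parameter 1) is exactly the set of numbers
`a + a⁻¹` as `a` ranges over all `N`-th roots of `b`. -/
theorem chebyshev_solution_set (N : ℕ) (hN : 1 ≤ N) (b : ℂ) (hb : b ≠ 0)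
    (y : ℂ) (hy : y = b + b⁻¹) :
    {x : ℂ | (Polynomial.dickson 1 (1 : ℂ) N).eval x = y} =
      {x : ℂ | ∃ a : ℂ, a ^ N = b ∧ x = a + a⁻¹} := by
  ext x
  simp only [Set.mem_setOf_eq, hy]
  constructor
  · intro h
    obtain ⟨a, ha0, hax⟩ := exists_add_inv x
    have key : (Polynomial.dickson 1 (1 : ℂ) N).eval x = a ^ N + (a ^ N)⁻¹ := by
      rw [← hax, Polynomial.dickson_one_one_eval_add_inv a a⁻¹ (mul_inv_cancel₀ ha0), inv_pow]
    rw [key] at h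
    have haN : a ^ N ≠ 0 := pow_ne_zero _ ha0
    rcases add_inv_inj haN hb h with h1 | h1
    · exact ⟨a, h1, hax.symm⟩
    · refine ⟨a⁻¹, ?_, by rw [inv_inv, add_comm, hax]⟩
      rw [inv_pow, h1, inv_inv]
  · rintro ⟨a, haN, rfl⟩
    have ha0 : a ≠ 0 := by rintro rfl; rw [zero_pow (by omega : N ≠ 0)] at haN; exact hb haN.symm
    rw [Polynomial.dickson_one_one_eval_add_inv a a⁻¹ (mul_inv_cancel₀ ha0), inv_pow, haN]
end

section
/- Let N ≥ 1 be an integer, let q ∈ ℂ be a primitive N-th root of unity, and let a, b ∈ ℂ be nonzero. Suppose (X₁, Y₁) and (X₂, Y₂) are two pairs of N×N complex matrices satisfying Xᵢ·Yᵢ = q·(Yᵢ·Xᵢ), Xᵢ^N = a·Id and Yᵢ^N = b·Id for i = 1, 2. Then the two pairs are simultaneously conjugate: there exists an invertible N×N complex matrix P with X₂ = P·X₁·P⁻¹ and Y₂ = P·Y₁·P⁻¹. -/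
open Matrix

/-- Canonical cyclic-shift matrix with twist `a`. -/
noncomputable def qtXc (N : ℕ) (a : ℂ) : Matrix (Fin N) (Fin N) ℂ :=
  Matrix.of fun i j =>
    if h : (j : ℕ) + 1 = N then (if i = ⟨0, by omega⟩ then a else 0)
    else (if i = ⟨(j : ℕ) + 1, by omega⟩ then 1 else 0)

lemma qt_aux (N : ℕ) (hN : 1 ≤ N) (q : ℂ) (hq : IsPrimitiveRoot q N)
    (a b lam : ℂ) (ha : a ≠ 0) (hb : b ≠ 0) (hlam : lam ^ N = b)
    (X Y : Matrix (Fin N) (Fin N) ℂ)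
    (hrel : X * Y = q • (Y * X))
    (hX : X ^ N = a • (1 : Matrix (Fin N) (Fin N) ℂ))
    (hY : Y ^ N = b • (1 : Matrix (Fin N) (Fin N) ℂ)) :
    ∃ P : Matrix (Fin N) (Fin N) ℂ, IsUnit P ∧
      X * P = P * qtXc N a ∧
      Y * P = P * Matrix.diagonal (fun j : Fin N => lam * q ^ ((N - (j : ℕ)) % N)) := by
  have hq0 : q ≠ 0 := hq.ne_zero (by omega)
  have hlam0 : lam ≠ 0 := fun h => hb (by rw [← hlam, h, zero_pow (by omega)])
  -- X is a unit
  have hXu : IsUnit X := by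
    have hXX : X * (a⁻¹ • X ^ (N - 1)) = 1 := by
      have h1 : X * X ^ (N - 1) = X ^ N := by
        rw [← pow_succ', Nat.sub_add_cancel hN]
      rw [Matrix.mul_smul, h1, hX, smul_smul, inv_mul_cancel₀ ha, one_smul]
    exact ⟨⟨X, a⁻¹ • X ^ (N - 1), hXX, mul_eq_one_comm.mp hXX⟩, rfl⟩
  -- commutation rule
  have hcomm : ∀ k : ℕ, X ^ k * Y = (q ^ k) • (Y * X ^ k) := by
    intro k
    induction k with
    | zero => simp
    | succ k ih =>
      rw [pow_succ, mul_assoc, hrel, mul_smul_comm, ← mul_assoc, ih, smul_mul_assoc,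
        smul_smul, ← mul_assoc, pow_succ, mul_comm (q ^ k) q]
  -- an eigenvector of Y
  haveI : Nonempty (Fin N) := ⟨⟨0, by omega⟩⟩
  obtain ⟨μ, hμ⟩ := Module.End.exists_eigenvalue (Matrix.mulVecLin Y)
  obtain ⟨w, hw⟩ := hμ.exists_hasEigenvector
  have hw0 : w ≠ 0 := hw.right
  have hwv : Y *ᵥ w = μ • w := by
    have := hw.apply_eq_smul
    simpa [Matrix.mulVecLin_apply] using this
  have hpowv : ∀ k : ℕ, (Y ^ k) *ᵥ w = (μ ^ k) • w := by
    intro k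
    induction k with
    | zero => simp
    | succ k ih =>
      rw [pow_succ, ← Matrix.mulVec_mulVec, hwv, Matrix.mulVec_smul, ih, smul_smul,
        ← pow_succ']
  have hμN : μ ^ N = b := by
    have h1 : (μ ^ N) • w = b • w := by
      rw [← hpowv N, hY, Matrix.smul_mulVec, Matrix.one_mulVec]
    have h2 : (μ ^ N - b) • w = 0 := by rw [sub_smul, h1, sub_self]
    rcases smul_eq_zero.mp h2 with h | h
    · exact sub_eq_zero.mp h
    · exact absurd h hw0
  -- μ = q^k * lam
  haveI : NeZero N := ⟨by omega⟩
  obtain ⟨k, -, hk⟩ : ∃ i < N, q ^ i = μ * lam⁻¹ := by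
    refine hq.eq_pow_of_pow_eq_one ?_
    rw [mul_pow, hμN, inv_pow, hlam, mul_inv_cancel₀ hb]
  have hμeq : μ = q ^ k * lam := by
    rw [hk, inv_mul_cancel_right₀ hlam0]
  -- v : eigenvector with eigenvalue lam
  set v : Fin N → ℂ := (X ^ k) *ᵥ w with hv
  have hv0 : v ≠ 0 := by
    intro h
    exact hw0 ((Matrix.mulVec_injective_iff_isUnit.mpr (hXu.pow k)) (by simpa using h))
  have hYv : Y *ᵥ v = lam • v := by
    have h1 : (X ^ k * Y) *ᵥ w = (q ^ k) • (Y *ᵥ v) := by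
      rw [hcomm k, Matrix.smul_mulVec, ← Matrix.mulVec_mulVec, hv]
    have h2 : (X ^ k * Y) *ᵥ w = (q ^ k) • (lam • v) := by
      rw [← Matrix.mulVec_mulVec, hwv, Matrix.mulVec_smul, hμeq, ← smul_smul, hv]
    exact smul_right_injective (Fin N → ℂ) (pow_ne_zero k hq0) (h1.symm.trans h2)
  -- the eigenbasis
  set e : Fin N → (Fin N → ℂ) := fun j => (X ^ (j : ℕ)) *ᵥ v with he
  set d : Fin N → ℂ := fun j => lam * q ^ ((N - (j : ℕ)) % N) with hd
  have hej : ∀ j : Fin N, e j = (X ^ (j : ℕ)) *ᵥ v := fun j => by rw [he]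
  have he0 : ∀ j, e j ≠ 0 := by
    intro j h
    exact hv0 ((Matrix.mulVec_injective_iff_isUnit.mpr (hXu.pow (j : ℕ))) (by simpa using h))
  have hpowq : ∀ j : Fin N, q ^ (j : ℕ) * q ^ ((N - (j : ℕ)) % N) = 1 := by
    intro j
    rcases Nat.eq_zero_or_pos (j : ℕ) with h0 | h0
    · simp [h0, Nat.mod_self]
    · have hlt : N - (j : ℕ) < N := by omega
      rw [Nat.mod_eq_of_lt hlt, ← pow_add, show (j : ℕ) + (N - (j : ℕ)) = N by omega,
        hq.pow_eq_one]
  have hYe : ∀ j, Y *ᵥ (e j) = d j • e j := by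
    intro j
    have h1 : (X ^ (j : ℕ) * Y) *ᵥ v = (q ^ (j : ℕ)) • (Y *ᵥ e j) := by
      rw [hcomm, Matrix.smul_mulVec, ← Matrix.mulVec_mulVec, hej j]
    have h2 : (X ^ (j : ℕ) * Y) *ᵥ v = (q ^ (j : ℕ)) • (d j • e j) := by
      rw [← Matrix.mulVec_mulVec, hYv, Matrix.mulVec_smul]
      have : lam = q ^ (j : ℕ) * d j := by
        rw [hd]; dsimp only
        rw [← mul_assoc, mul_comm _ lam, mul_assoc, hpowq j, mul_one]
      rw [this, ← smul_smul]
    exact smul_right_injective (Fin N → ℂ) (pow_ne_zero _ hq0) (h1.symm.trans h2)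
  -- d is injective
  have hdinj : Function.Injective d := by
    intro i j hij
    rw [hd] at hij
    have h1 : q ^ ((N - (i : ℕ)) % N) = q ^ ((N - (j : ℕ)) % N) :=
      mul_left_cancel₀ hlam0 hij
    have h2 := hq.pow_inj (Nat.mod_lt _ (by omega)) (Nat.mod_lt _ (by omega)) h1
    have hi := i.isLt; have hj := j.isLt
    ext
    rcases Nat.eq_zero_or_pos (i : ℕ) with h0 | h0 <;>
      rcases Nat.eq_zero_or_pos (j : ℕ) with h0' | h0'
    · omega
    · rw [h0, Nat.sub_zero, Nat.mod_self, Nat.mod_eq_of_lt (by omega)] at h2; omega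
    · rw [h0', Nat.sub_zero, Nat.mod_self, Nat.mod_eq_of_lt (by omega)] at h2; omega
    · rw [Nat.mod_eq_of_lt (by omega), Nat.mod_eq_of_lt (by omega)] at h2; omega
  -- linear independence / invertibility of P
  have hli : LinearIndependent ℂ e := by
    refine Module.End.eigenvectors_linearIndependent' (Matrix.mulVecLin Y) d hdinj e ?_
    intro j
    refine ⟨Module.End.mem_eigenspace_iff.mpr ?_, he0 j⟩
    simpa [Matrix.mulVecLin_apply] using hYe j
  set P : Matrix (Fin N) (Fin N) ℂ := Matrix.of fun i j => e j i with hP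
  have hPu : IsUnit P := by
    rw [← Matrix.linearIndependent_cols_iff_isUnit]
    have : P.col = e := by funext j i; rfl
    rw [this]; exact hli
  refine ⟨P, hPu, ?_, ?_⟩
  · -- X * P = P * qtXc N a
    ext i j
    have hL : (X * P) i j = (X *ᵥ e j) i := by
      simp [Matrix.mul_apply, Matrix.mulVec, dotProduct, hP]
    have hXej : X *ᵥ e j = (X ^ ((j : ℕ) + 1)) *ᵥ v := by
      rw [hej j, Matrix.mulVec_mulVec, ← pow_succ']
    by_cases hj : (j : ℕ) + 1 = N
    · have hz : e ⟨0, by omega⟩ = v := by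
        rw [hej]; show (X ^ (0 : ℕ)) *ᵥ v = v
        rw [pow_zero, Matrix.one_mulVec]
      have hXN : X *ᵥ e j = a • e ⟨0, by omega⟩ := by
        have h9 : X ^ ((j : ℕ) + 1) = a • (1 : Matrix (Fin N) (Fin N) ℂ) := by rw [hj, hX]
        rw [hXej, h9, Matrix.smul_mulVec, Matrix.one_mulVec, hz]
      have hR : (P * qtXc N a) i j = a * e ⟨0, by omega⟩ i := by
        rw [Matrix.mul_apply]
        simp only [qtXc, Matrix.of_apply, dif_pos hj, mul_ite, mul_zero, hP,
          Finset.sum_ite_eq', Finset.mem_univ, if_true]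
        ring
      rw [hL, hR, hXN]
      simp
    · have hlt : (j : ℕ) + 1 < N := by have := j.isLt; omega
      have hXN : X *ᵥ e j = e ⟨(j : ℕ) + 1, hlt⟩ := by
        rw [hXej, hej]
      have hR : (P * qtXc N a) i j = e ⟨(j : ℕ) + 1, hlt⟩ i := by
        rw [Matrix.mul_apply]
        simp only [qtXc, Matrix.of_apply, dif_neg hj, mul_ite, mul_zero, mul_one, hP,
          Finset.sum_ite_eq', Finset.mem_univ, if_true]
      rw [hL, hR, hXN]
  · -- Y * P = P * diagonal d
    ext i j
    have hYP : (Y * P) i j = (Y *ᵥ e j) i := by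
      simp [Matrix.mul_apply, Matrix.mulVec, dotProduct, hP]
    rw [hYP, hYe, Matrix.mul_diagonal]
    simp [hP, hd, mul_comm]

lemma qt_conj_trans {n : Type*} [Fintype n] [DecidableEq n] (A₁ A₂ C P₁ P₂ : Matrix n n ℂ)
    (h1 : IsUnit P₁) (h2 : IsUnit P₂) (e1 : A₁ * P₁ = P₁ * C) (e2 : A₂ * P₂ = P₂ * C) :
    A₂ = (P₂ * P₁⁻¹) * A₁ * (P₂ * P₁⁻¹)⁻¹ := by
  have hd1 : IsUnit P₁.det := (Matrix.isUnit_iff_isUnit_det _).mp h1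
  have hd2 : IsUnit P₂.det := (Matrix.isUnit_iff_isUnit_det _).mp h2
  have i1 : P₁⁻¹ * P₁ = 1 := Matrix.nonsing_inv_mul _ hd1
  have i2' : P₂ * P₂⁻¹ = 1 := Matrix.mul_nonsing_inv _ hd2
  have hC : C = P₁⁻¹ * A₁ * P₁ := by
    rw [mul_assoc, e1, ← mul_assoc, i1, one_mul]
  have hA2 : A₂ = P₂ * C * P₂⁻¹ := by
    rw [← e2, mul_assoc, i2', mul_one]
  rw [Matrix.mul_inv_rev, Matrix.nonsing_inv_nonsing_inv _ hd1, hA2, hC]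
  simp only [mul_assoc]

/-- Uniqueness, up to simultaneous conjugation, of a pair of `N×N` matrices satisfying the
quantum-torus relation `X·Y = q·(Y·X)` (for `q` a primitive `N`-th root of unity) with
prescribed central character `X^N = a·Id`, `Y^N = b·Id`. -/
theorem quantum_torus_rep_unique (N : ℕ) (hN : 1 ≤ N)
    (q : ℂ) (hq : IsPrimitiveRoot q N) (a b : ℂ) (ha : a ≠ 0) (hb : b ≠ 0)
    (X₁ Y₁ X₂ Y₂ : Matrix (Fin N) (Fin N) ℂ)
    (hrel₁ : X₁ * Y₁ = q • (Y₁ * X₁)) (hrel₂ : X₂ * Y₂ = q • (Y₂ * X₂))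
    (hX₁ : X₁ ^ N = a • (1 : Matrix (Fin N) (Fin N) ℂ))
    (hY₁ : Y₁ ^ N = b • (1 : Matrix (Fin N) (Fin N) ℂ))
    (hX₂ : X₂ ^ N = a • (1 : Matrix (Fin N) (Fin N) ℂ))
    (hY₂ : Y₂ ^ N = b • (1 : Matrix (Fin N) (Fin N) ℂ)) :
    ∃ P : Matrix (Fin N) (Fin N) ℂ, IsUnit P ∧
      X₂ = P * X₁ * P⁻¹ ∧ Y₂ = P * Y₁ * P⁻¹ := by
  obtain ⟨lam, hlam⟩ := IsAlgClosed.exists_pow_nat_eq b (show 0 < N by omega)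
  obtain ⟨P₁, hP₁, hXP₁, hYP₁⟩ := qt_aux N hN q hq a b lam ha hb hlam X₁ Y₁ hrel₁ hX₁ hY₁
  obtain ⟨P₂, hP₂, hXP₂, hYP₂⟩ := qt_aux N hN q hq a b lam ha hb hlam X₂ Y₂ hrel₂ hX₂ hY₂
  have hd1 : IsUnit P₁.det := (Matrix.isUnit_iff_isUnit_det _).mp hP₁
  have hinv : IsUnit (P₁⁻¹) :=
    ⟨⟨P₁⁻¹, P₁, Matrix.nonsing_inv_mul _ hd1, Matrix.mul_nonsing_inv _ hd1⟩, rfl⟩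
  exact ⟨P₂ * P₁⁻¹, hP₂.mul hinv,
    qt_conj_trans X₁ X₂ (qtXc N a) P₁ P₂ hP₁ hP₂ hXP₁ hXP₂,
    qt_conj_trans Y₁ Y₂ _ P₁ P₂ hP₁ hP₂ hYP₁ hYP₂⟩
end

section
/- Let N ≥ 1 be an integer and let q ∈ ℂ be a primitive N-th root of unity. If X and Y are invertible N×N complex matrices with X·Y = q·(Y·X), then X^N and Y^N are scalar multiples of the identity matrix. -/
open Polynomial Matrix

variable {N : ℕ}

lemma my_eval_charpoly (M : Matrix (Fin N) (Fin N) ℂ) (t : ℂ) :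
    M.charpoly.eval t = (t • (1 : Matrix (Fin N) (Fin N) ℂ) - M).det := by
  rw [Matrix.charpoly, ← Polynomial.coe_evalRingHom, RingHom.map_det]
  congr 1
  ext i j
  by_cases h : i = j <;>
    simp [h, charmatrix_apply, Matrix.one_apply, Matrix.smul_apply, Matrix.sub_apply,
      diagonal_apply]

lemma my_charpoly_conj (A : Matrix (Fin N) (Fin N) ℂ) (U : (Matrix (Fin N) (Fin N) ℂ)ˣ) :
    ((U : Matrix (Fin N) (Fin N) ℂ) * A * (↑(U⁻¹) : Matrix (Fin N) (Fin N) ℂ)).charpoly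
      = A.charpoly := by
  apply Polynomial.funext
  intro t
  rw [my_eval_charpoly, my_eval_charpoly]
  have : t • (1 : Matrix (Fin N) (Fin N) ℂ) - (U : Matrix (Fin N) (Fin N) ℂ) * A * (↑(U⁻¹) : Matrix (Fin N) (Fin N) ℂ)
      = (U : Matrix (Fin N) (Fin N) ℂ) * (t • 1 - A) * (↑(U⁻¹) : Matrix (Fin N) (Fin N) ℂ) := by
    rw [Matrix.mul_sub, Matrix.sub_mul]
    congr 1
    rw [Matrix.mul_smul, Matrix.smul_mul, Matrix.mul_one, U.mul_inv]
  rw [this, det_mul, det_mul, mul_comm, ← mul_assoc, ← det_mul, U.inv_mul, det_one, one_mul]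

lemma coeff_comp_C_mul_X (p : ℂ[X]) (a : ℂ) (k : ℕ) :
    (p.comp (C a * X)).coeff k = p.coeff k * a ^ k := by
  rw [Polynomial.comp, Polynomial.eval₂_eq_sum, Polynomial.sum]
  rw [Polynomial.finset_sum_coeff]
  have : ∀ i ∈ p.support, (C (p.coeff i) * (C a * X) ^ i).coeff k
      = if i = k then p.coeff i * a ^ i else 0 := by
    intro i _
    rw [mul_pow, ← C_pow, ← mul_assoc, ← C_mul, coeff_C_mul, coeff_X_pow]
    simp [eq_comm]
  rw [Finset.sum_congr rfl this]
  by_cases hk : k ∈ p.support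
  · rw [Finset.sum_ite_eq' p.support k (fun i => p.coeff i * a ^ i)] at *
    simp [hk]
  · rw [Finset.sum_eq_zero, Polynomial.notMem_support_iff.mp hk, zero_mul]
    intro i hi
    simp only [ite_eq_right_iff]
    intro h; exact absurd (h ▸ hi) hk

lemma key_scalar (hN : 1 ≤ N) (q : ℂ) (hq : IsPrimitiveRoot q N)
    (M : Matrix (Fin N) (Fin N) ℂ)
    (h : M.charpoly = (q • M : Matrix (Fin N) (Fin N) ℂ).charpoly) :
    ∃ c : ℂ, M ^ N = c • (1 : Matrix (Fin N) (Fin N) ℂ) := by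
  have hNpos : 0 < N := hN
  have hq0 : q ≠ 0 := hq.ne_zero hNpos.ne'
  have hqN : q ^ N = 1 := hq.pow_eq_one
  -- eval identity
  have heval : ∀ t : ℂ, M.charpoly.eval t = q ^ N * M.charpoly.eval (q⁻¹ * t) := by
    intro t
    have l1 : M.charpoly.eval t
        = (t • (1 : Matrix (Fin N) (Fin N) ℂ) - q • M).det := by
      rw [h, my_eval_charpoly]
    have heq : t • (1 : Matrix (Fin N) (Fin N) ℂ) - q • M
        = q • ((q⁻¹ * t) • (1 : Matrix (Fin N) (Fin N) ℂ) - M) := by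
      rw [smul_sub, smul_smul, ← mul_assoc, mul_inv_cancel₀ hq0, one_mul]
    rw [l1, heq, Matrix.det_smul, Fintype.card_fin, my_eval_charpoly]
  set p := M.charpoly with hp
  -- polynomial identity
  have hpoly : p = q ^ N • (p.comp (C q⁻¹ * X)) := by
    apply Polynomial.funext
    intro t
    rw [Polynomial.eval_smul, Polynomial.eval_comp]
    simp only [eval_mul, eval_C, eval_X, smul_eq_mul]
    exact heval t
  -- coefficients vanish for 0 < k < N
  have hcoeff : ∀ k, 0 < k → k < N → p.coeff k = 0 := by
    intro k hk0 hkN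
    have h1 : p.coeff k = q ^ N * (p.coeff k * q⁻¹ ^ k) := by
      conv_lhs => rw [hpoly]
      rw [Polynomial.coeff_smul, coeff_comp_C_mul_X, smul_eq_mul]
    have h2 : q ^ N * q⁻¹ ^ k = q ^ (N - k) := by
      field_simp
      rw [one_div, inv_pow, ← div_eq_mul_inv, div_eq_iff (pow_ne_zero _ hq0), ← pow_add]
      congr 1
      omega
    have h3 : p.coeff k = q ^ (N - k) * p.coeff k := by
      rw [← h2]; linear_combination h1
    have h4 : q ^ (N - k) ≠ 1 := hq.pow_ne_one_of_pos_of_lt (by omega) (by omega)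
    have h5 : (q ^ (N - k) - 1) * p.coeff k = 0 := by linear_combination -h3
    rcases mul_eq_zero.mp h5 with h6 | h6
    · exact absurd (by linear_combination h6) h4
    · exact h6
  -- structure of charpoly
  have hdeg : p.natDegree = N := by
    rw [hp, Matrix.charpoly_natDegree_eq_dim, Fintype.card_fin]
  have hmonic : p.Monic := Matrix.charpoly_monic M
  have hstruct : p = X ^ N + C (p.coeff 0) := by
    ext m
    rw [coeff_add, coeff_X_pow, coeff_C]
    rcases lt_trichotomy m N with hm | hm | hm
    · rcases Nat.eq_zero_or_pos m with hm0 | hm0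
      · subst hm0
        simp [hNpos.ne, (show ¬(0 = N) by omega)]
      · rw [hcoeff m hm0 hm]
        simp [hm.ne, hm0.ne']
    · rw [hm]
      have h1 : p.coeff N = 1 := by
        have := hmonic.coeff_natDegree
        rwa [hdeg] at this
      simp [h1, hNpos.ne']
    · rw [Polynomial.coeff_eq_zero_of_natDegree_lt (by omega : p.natDegree < m)]
      simp [hm.ne', (show ¬(m = 0) by omega)]
  -- Cayley-Hamilton
  have hCH : Polynomial.aeval M p = 0 := Matrix.aeval_self_charpoly M
  rw [hstruct] at hCH
  simp only [map_add, map_pow, Polynomial.aeval_X, Polynomial.aeval_C] at hCH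
  refine ⟨-(p.coeff 0), ?_⟩
  have hfin : M ^ N = -(algebraMap ℂ (Matrix (Fin N) (Fin N) ℂ)) (p.coeff 0) := by
    linear_combination (norm := (abel_nf; try rfl)) hCH
  rw [hfin, Algebra.algebraMap_eq_smul_one, neg_smul]

/-- If `q` is a primitive `N`-th root of unity and `X`, `Y` are invertible `N×N` complex
matrices with `X·Y = q·(Y·X)`, then `X^N` and `Y^N` are scalar multiples of the
identity matrix. -/
theorem quantum_torus_pow_central (N : ℕ) (hN : 1 ≤ N)
    (q : ℂ) (hq : IsPrimitiveRoot q N)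
    (X Y : Matrix (Fin N) (Fin N) ℂ) (hX : IsUnit X) (hY : IsUnit Y)
    (hrel : X * Y = q • (Y * X)) :
    (∃ cX : ℂ, X ^ N = cX • (1 : Matrix (Fin N) (Fin N) ℂ)) ∧
      (∃ cY : ℂ, Y ^ N = cY • (1 : Matrix (Fin N) (Fin N) ℂ)) := by
  constructor
  · set U := hY.unit with hUdef
    have hU : (U : Matrix (Fin N) (Fin N) ℂ) = Y := hY.unit_spec
    have h1 : X * (U : Matrix (Fin N) (Fin N) ℂ)
        = (U : Matrix (Fin N) (Fin N) ℂ) * (q • X) := by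
      rw [hU, Matrix.mul_smul, ← hrel]
    have h2 : (↑(U⁻¹) : Matrix (Fin N) (Fin N) ℂ) * X * (↑((U⁻¹)⁻¹) : Matrix (Fin N) (Fin N) ℂ)
        = q • X := by
      rw [inv_inv U, Matrix.mul_assoc, h1, ← Matrix.mul_assoc, Units.inv_mul,
        Matrix.one_mul]
    have h3 : X.charpoly = (q • X : Matrix (Fin N) (Fin N) ℂ).charpoly := by
      rw [← h2, my_charpoly_conj]
    exact key_scalar hN q hq X h3
  · set V := hX.unit with hVdef
    have hV : (V : Matrix (Fin N) (Fin N) ℂ) = X := hX.unit_spec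
    have h1 : (V : Matrix (Fin N) (Fin N) ℂ) * Y
        = (q • Y) * (V : Matrix (Fin N) (Fin N) ℂ) := by
      rw [hV, hrel, smul_mul_assoc]
    have h2 : (V : Matrix (Fin N) (Fin N) ℂ) * Y * (↑(V⁻¹) : Matrix (Fin N) (Fin N) ℂ) = q • Y := by
      rw [h1, Matrix.mul_assoc, Units.mul_inv, Matrix.mul_one]
    have h3 : Y.charpoly = (q • Y : Matrix (Fin N) (Fin N) ℂ).charpoly := by
      rw [← h2, my_charpoly_conj]
    exact key_scalar hN q hq Y h3
end

section
/- Let N ≥ 1 and t ≥ 0 be integers, for each i ∈ {1, …, t} let qᵢ ∈ ℂ be a primitive N-th root of unity and aᵢ, bᵢ ∈ ℂ nonzero. Suppose (X₁, …, X_t, Y₁, …, Y_t) and (X₁', …, X_t', Y₁', …, Y_t') are two families of N^t × N^t complex matrices, each satisfying: Xᵢ·Yᵢ = qᵢ·(Yᵢ·Xᵢ) for every i; Xᵢ commutes with Xⱼ and Yⱼ and Yᵢ commutes with Yⱼ for i ≠ j; Xᵢ^N = aᵢ·Id and Yᵢ^N = bᵢ·Id for every i (and likewise for the primed family with the same scalars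 aᵢ, bᵢ). Then the two families are simultaneously conjugate: there exists an invertible N^t × N^t complex matrix P with Xᵢ' = P·Xᵢ·P⁻¹ and Yᵢ' = P·Yᵢ·P⁻¹ for every i. -/
open Matrix

/-- Common eigenvector for a commuting family of endomorphisms over ℂ. -/
lemma exists_common_eigenvector (t : ℕ) :
    ∀ {V : Type} [AddCommGroup V] [Module ℂ V] [FiniteDimensional ℂ V] [Nontrivial V]
      (f : Fin t → Module.End ℂ V),
      (∀ i j, Commute (f i) (f j)) →
      ∃ v : V, v ≠ 0 ∧ ∀ i, ∃ μ : ℂ, f i v = μ • v := by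
  induction t with
  | zero =>
    intro V _ _ _ _ f _
    obtain ⟨v, hv⟩ := exists_ne (0 : V)
    exact ⟨v, hv, fun i => i.elim0⟩
  | succ t ih =>
    intro V _ _ _ _ f hcomm
    obtain ⟨μ₀, hμ₀⟩ := Module.End.exists_eigenvalue (f 0)
    set E := Module.End.eigenspace (f 0) μ₀ with hEdef
    have hmapsTo : ∀ i : Fin t, Set.MapsTo (f i.succ) E E := by
      intro i x hx
      have hx' : f 0 x = μ₀ • x := Module.End.mem_eigenspace_iff.mp hx
      refine Module.End.mem_eigenspace_iff.mpr ?_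
      calc f 0 (f i.succ x) = f i.succ (f 0 x) := by
            rw [← Module.End.mul_apply, ← Module.End.mul_apply, (hcomm 0 i.succ).eq]
        _ = μ₀ • f i.succ x := by rw [hx', LinearMap.map_smul]
    haveI : Nontrivial E := Submodule.nontrivial_iff_ne_bot.mpr hμ₀
    set g : Fin t → Module.End ℂ E := fun i => (f i.succ).restrict (hmapsTo i) with hgdef
    have hgcomm : ∀ i j, Commute (g i) (g j) := by
      intro i j
      ext x
      have h := congrArg (fun φ => φ (x : V)) (hcomm i.succ j.succ).eq
      simp only [Module.End.mul_apply] at h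
      simp only [Module.End.mul_apply, hgdef, LinearMap.restrict_coe_apply]
      exact h
    obtain ⟨v, hv, hvp⟩ := ih g hgcomm
    refine ⟨(v : V), by simpa using hv, ?_⟩
    intro i
    refine Fin.cases ?_ ?_ i
    · exact ⟨μ₀, Module.End.mem_eigenspace_iff.mp v.2⟩
    · intro j
      obtain ⟨μ, hμ⟩ := hvp j
      refine ⟨μ, ?_⟩
      have := congrArg (Submodule.subtype E) hμ
      exact this

/-- Joint eigenvectors with pairwise distinct eigenvalue tuples are linearly independent. -/
lemma linearIndependent_of_joint_eigen {V : Type*} [AddCommGroup V] [Module ℂ V]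
    {κ ι : Type*} (f : ι → Module.End ℂ V) (w : κ → V) (μ : κ → ι → ℂ)
    (hw : ∀ k, w k ≠ 0) (heig : ∀ k i, f i (w k) = μ k i • w k)
    (hinj : Function.Injective μ) : LinearIndependent ℂ w := by
  classical
  rw [linearIndependent_iff']
  intro s
  induction s using Finset.strongInductionOn with
  | _ s ihs =>
    intro g hsum k hk
    by_cases hone : ∃ k' ∈ s, k' ≠ k
    · obtain ⟨k', hk', hkk'⟩ := hone
      obtain ⟨i, hi⟩ : ∃ i, μ k i ≠ μ k' i := by
        by_contra h
        push_neg at h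
        exact hkk' (hinj (funext h)).symm
      have h2 : ∑ j ∈ s, (g j * (μ j i - μ k' i)) • w j = 0 := by
        have h3 : ∀ j ∈ s, (g j * (μ j i - μ k' i)) • w j
            = g j • (f i (w j)) - μ k' i • (g j • w j) := by
          intro j _
          rw [heig]; module
        rw [Finset.sum_congr rfl h3, Finset.sum_sub_distrib, ← Finset.smul_sum]
        have h7 : ∑ x ∈ s, g x • f i (w x) = f i (∑ x ∈ s, g x • w x) := by
          rw [map_sum]; exact Finset.sum_congr rfl fun j _ => (LinearMap.map_smul _ _ _).symm
        rw [h7, hsum, map_zero, smul_zero, sub_zero]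
      have h4 : ∑ j ∈ s.erase k', (g j * (μ j i - μ k' i)) • w j = 0 := by
        rw [Finset.sum_erase _ (by simp), h2]
      have h5 := ihs (s.erase k') (Finset.erase_ssubset hk') _ h4 k
        (Finset.mem_erase.mpr ⟨fun h => hkk' h.symm, hk⟩)
      have h6 : μ k i - μ k' i ≠ 0 := sub_ne_zero.mpr hi
      exact (mul_eq_zero.mp h5).resolve_right h6
    · push_neg at hone
      have hs : s = {k} := by
        apply Finset.eq_singleton_iff_unique_mem.mpr
        exact ⟨hk, fun x hx => hone x hx⟩
      rw [hs, Finset.sum_singleton] at hsum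
      exact (smul_eq_zero.mp hsum).resolve_right (hw k)
open Matrix

lemma rep_basis {N : ℕ} (hN : 1 ≤ N) {t : ℕ} {n : Type} [Fintype n] [DecidableEq n]
    (q : Fin t → ℂ) (hq : ∀ i, IsPrimitiveRoot (q i) N)
    (a : Fin t → ℂ) (ha : ∀ i, a i ≠ 0)
    (X Y : Fin t → Matrix n n ℂ)
    (hrel : ∀ i, X i * Y i = q i • (Y i * X i))
    (hXX : ∀ i j, i ≠ j → X i * X j = X j * X i)
    (hXY : ∀ i j, i ≠ j → X i * Y j = Y j * X i)
    (hXN : ∀ i, X i ^ N = a i • (1 : Matrix n n ℂ))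
    (v : n → ℂ) (hv : v ≠ 0) (μ : Fin t → ℂ)
    (hμ : ∀ i, Y i *ᵥ v = μ i • v) :
    ∃ e : (Fin t → ZMod N) → (n → ℂ),
      (∀ k, e k ≠ 0) ∧
      (∀ k j, Y j *ᵥ e k = (μ j * (q j)⁻¹ ^ (k j).val) • e k) ∧
      (∀ k j, X j *ᵥ e k =
        (if (k j).val + 1 = N then a j else 1) • e (k + Pi.single j 1)) := by
  haveI : NeZero N := ⟨by omega⟩
  classical
  have hq0 : ∀ j, q j ≠ 0 := fun j => (hq j).ne_zero (by omega)
  have hXXc : ∀ i j, Commute (X i) (X j) := by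
    intro i j
    rcases eq_or_ne i j with rfl | h
    · exact Commute.refl _
    · exact hXX i j h
  set E : (Fin t → ℕ) → Matrix n n ℂ := fun m =>
    Finset.univ.noncommProd (fun i => X i ^ m i)
      (fun i _ j _ _ => (hXXc i j).pow_pow _ _) with hEdef
  set R : (Fin t → ℕ) → Fin t → Matrix n n ℂ := fun m j =>
    (Finset.univ.erase j).noncommProd (fun i => X i ^ m i)
      (fun i _ j' _ _ => (hXXc i j').pow_pow _ _) with hRdef
  have hsplit : ∀ (m : Fin t → ℕ) (j : Fin t), E m = X j ^ m j * R m j := by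
    intro m j
    exact (Finset.mul_noncommProd_erase Finset.univ (Finset.mem_univ j) _ _).symm
  have hRcongr : ∀ (m m' : Fin t → ℕ) (j : Fin t), (∀ i, i ≠ j → m i = m' i) →
      R m j = R m' j := by
    intro m m' j h
    exact Finset.noncommProd_congr rfl (fun x hx => by
      rw [h x (Finset.ne_of_mem_erase hx)]) _
  -- (E1)
  have hXE : ∀ (m : Fin t → ℕ) (j : Fin t),
      X j * E m = E (Function.update m j (m j + 1)) := by
    intro m j
    rw [hsplit m j, hsplit (Function.update m j (m j + 1)) j, ← mul_assoc, ← pow_succ',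
      Function.update_self,
      hRcongr (Function.update m j (m j + 1)) m j
        (fun i hij => Function.update_of_ne hij _ _)]
  -- (E2)
  have hEwrap : ∀ (m : Fin t → ℕ) (j : Fin t), m j = N →
      E m = a j • E (Function.update m j 0) := by
    intro m j hmj
    rw [hsplit m j, hsplit (Function.update m j 0) j, hmj, hXN j, Function.update_self,
      pow_zero, one_mul, smul_mul_assoc, one_mul,
      hRcongr (Function.update m j 0) m j (fun i hij => Function.update_of_ne hij _ _)]
  -- Y–X commutation
  have hYX : ∀ j, Y j * X j = (q j)⁻¹ • (X j * Y j) := by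
    intro j
    rw [hrel j, inv_smul_smul₀ (hq0 j)]
  have hYXpow : ∀ (j : Fin t) (m : ℕ),
      Y j * X j ^ m = ((q j)⁻¹ ^ m) • (X j ^ m * Y j) := by
    intro j m
    induction m with
    | zero => simp
    | succ m ih =>
      calc Y j * X j ^ (m + 1) = (Y j * X j ^ m) * X j := by rw [pow_succ, mul_assoc]
        _ = ((q j)⁻¹ ^ m) • (X j ^ m * (Y j * X j)) := by
              rw [ih, smul_mul_assoc, mul_assoc]
        _ = ((q j)⁻¹ ^ m) • (X j ^ m * ((q j)⁻¹ • (X j * Y j))) := by rw [hYX j]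
        _ = ((q j)⁻¹ ^ (m + 1)) • (X j ^ (m + 1) * Y j) := by
              rw [mul_smul_comm, smul_smul, ← pow_succ, ← mul_assoc, ← pow_succ]
  have hYR : ∀ (m : Fin t → ℕ) (j : Fin t), Commute (Y j) (R m j) := by
    intro m j
    refine Finset.noncommProd_commute _ _ _ _ (fun x hx => ?_)
    have hxj : x ≠ j := Finset.ne_of_mem_erase hx
    have hc : Commute (X x) (Y j) := hXY x j hxj
    exact hc.symm.pow_right _
  -- (E3)
  have hYE : ∀ (m : Fin t → ℕ) (j : Fin t),
      Y j * E m = ((q j)⁻¹ ^ m j) • (E m * Y j) := by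
    intro m j
    rw [hsplit m j, ← mul_assoc, hYXpow, smul_mul_assoc, mul_assoc, (hYR m j).eq,
      ← mul_assoc]
  -- (E4)
  have hXunit : ∀ i, IsUnit (X i) := by
    intro i
    have h1 : IsUnit (X i ^ N) := by
      rw [hXN i]
      exact ⟨⟨a i • 1, (a i)⁻¹ • 1,
        by rw [smul_mul_assoc, one_mul, smul_smul, mul_inv_cancel₀ (ha i), one_smul],
        by rw [smul_mul_assoc, one_mul, smul_smul, inv_mul_cancel₀ (ha i), one_smul]⟩, rfl⟩
    exact (isUnit_pow_iff (by omega : N ≠ 0)).mp h1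
  have hEunit : ∀ m, IsUnit (E m) := by
    intro m
    exact Finset.noncommProd_induction _ _ _ IsUnit
      (fun u w hu hw => hu.mul hw) isUnit_one (fun x _ => (hXunit x).pow _)
  -- the vectors
  have hval : ∀ (x : ZMod N), (x + 1).val = (x.val + 1) % N := by
    intro x
    have h1 : ((x.val + 1 : ℕ) : ZMod N) = x + 1 := by
      push_cast
      rw [ZMod.natCast_val, ZMod.cast_id]
    rw [← h1, ZMod.val_natCast]
  set e : (Fin t → ZMod N) → (n → ℂ) := fun k => E (fun i => (k i).val) *ᵥ v with hedef
  refine ⟨e, ?_, ?_, ?_⟩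
  · -- nonzero
    intro k h0
    simp only [hedef] at h0
    have hd := (Matrix.isUnit_iff_isUnit_det _).mp (hEunit fun i => (k i).val)
    apply hv
    have h1 : (E fun i => (k i).val)⁻¹ *ᵥ ((E fun i => (k i).val) *ᵥ v) = v := by
      rw [mulVec_mulVec, Matrix.nonsing_inv_mul _ hd, one_mulVec]
    rw [← h1, h0, mulVec_zero]
  · -- eigen for Y
    intro k j
    simp only [hedef]
    rw [mulVec_mulVec, hYE, smul_mulVec, ← mulVec_mulVec, hμ j, mulVec_smul,
      smul_smul, mul_comm]
  · -- shift for X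
    intro k j
    simp only [hedef]
    have hmlt : (k j).val < N := ZMod.val_lt _
    rw [mulVec_mulVec, hXE]
    by_cases hcase : (k j).val + 1 = N
    · have hidx : (fun i => (((k + Pi.single j 1) : Fin t → ZMod N) i).val)
          = Function.update (fun i => (k i).val) j 0 := by
        funext i
        rcases eq_or_ne i j with rfl | hij
        · simp only [Function.update_self, Pi.add_apply, Pi.single_eq_same]
          rw [hval, hcase, Nat.mod_self]
        · simp only [Function.update_of_ne hij, Pi.add_apply, Pi.single_eq_of_ne hij,
            add_zero]
      rw [show Function.update (fun i => (k i).val) j ((fun i => (k i).val) j + 1)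
            = Function.update (fun i => (k i).val) j N by
          rw [show (fun i => (k i).val) j + 1 = N from hcase],
        hEwrap _ j (Function.update_self _ _ _), Function.update_idem, ← hidx,
        if_pos hcase, smul_mulVec]
    · have hlt : (k j).val + 1 < N := lt_of_le_of_ne hmlt hcase
      have hidx : (fun i => (((k + Pi.single j 1) : Fin t → ZMod N) i).val)
          = Function.update (fun i => (k i).val) j ((k j).val + 1) := by
        funext i
        rcases eq_or_ne i j with rfl | hij
        · simp only [Function.update_self, Pi.add_apply, Pi.single_eq_same]
          rw [hval, Nat.mod_eq_of_lt hlt]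
        · simp only [Function.update_of_ne hij, Pi.add_apply, Pi.single_eq_of_ne hij,
            add_zero]
      rw [← hidx, if_neg hcase, one_smul]

/-- Uniqueness up to simultaneous conjugation of the `N^t`-dimensional representation of a
tensor product of `t` quantum 2-tori at primitive `N`-th roots of unity with prescribed
central character `Xᵢ^N = aᵢ·Id`, `Yᵢ^N = bᵢ·Id`. -/
theorem tensor_quantum_torus_rep_unique (N : ℕ) (hN : 1 ≤ N) (t : ℕ)
    (q : Fin t → ℂ) (hq : ∀ i, IsPrimitiveRoot (q i) N)
    (a b : Fin t → ℂ) (ha : ∀ i, a i ≠ 0) (hb : ∀ i, b i ≠ 0)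
    (X Y X' Y' : Fin t → Matrix (Fin (N ^ t)) (Fin (N ^ t)) ℂ)
    (hrel : ∀ i, X i * Y i = q i • (Y i * X i))
    (hXX : ∀ i j, i ≠ j → X i * X j = X j * X i)
    (hXY : ∀ i j, i ≠ j → X i * Y j = Y j * X i)
    (hYY : ∀ i j, i ≠ j → Y i * Y j = Y j * Y i)
    (hXN : ∀ i, X i ^ N = a i • (1 : Matrix (Fin (N ^ t)) (Fin (N ^ t)) ℂ))
    (hYN : ∀ i, Y i ^ N = b i • (1 : Matrix (Fin (N ^ t)) (Fin (N ^ t)) ℂ))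
    (hrel' : ∀ i, X' i * Y' i = q i • (Y' i * X' i))
    (hXX' : ∀ i j, i ≠ j → X' i * X' j = X' j * X' i)
    (hXY' : ∀ i j, i ≠ j → X' i * Y' j = Y' j * X' i)
    (hYY' : ∀ i j, i ≠ j → Y' i * Y' j = Y' j * Y' i)
    (hXN' : ∀ i, X' i ^ N = a i • (1 : Matrix (Fin (N ^ t)) (Fin (N ^ t)) ℂ))
    (hYN' : ∀ i, Y' i ^ N = b i • (1 : Matrix (Fin (N ^ t)) (Fin (N ^ t)) ℂ)) :
    ∃ P : Matrix (Fin (N ^ t)) (Fin (N ^ t)) ℂ, IsUnit P ∧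
      ∀ i, X' i = P * X i * P⁻¹ ∧ Y' i = P * Y i * P⁻¹ := by
  classical
  haveI : NeZero N := ⟨by omega⟩
  haveI : Nonempty (Fin (N ^ t)) := ⟨⟨0, pow_pos (by omega) t⟩⟩
  have hq0 : ∀ j, q j ≠ 0 := fun j => (hq j).ne_zero (by omega)
  -- eigenvector power lemma
  have hpow : ∀ (A : Matrix (Fin (N ^ t)) (Fin (N ^ t)) ℂ) (c : ℂ) (w : Fin (N ^ t) → ℂ),
      A *ᵥ w = c • w → ∀ s : ℕ, (A ^ s) *ᵥ w = (c ^ s) • w := by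
    intro A c w h s
    induction s with
    | zero => simp
    | succ s ih =>
      rw [pow_succ, ← mulVec_mulVec, h, mulVec_smul, ih, smul_smul, ← pow_succ']
  -- scalar comparison on a nonzero vector
  have hcmp : ∀ (c d : ℂ) (w : Fin (N ^ t) → ℂ), w ≠ 0 → c • w = d • w → c = d := by
    intro c d w hw h
    by_contra hcd
    have : (c - d) • w = 0 := by rw [sub_smul, h, sub_self]
    exact hw ((smul_eq_zero.mp this).resolve_left (sub_ne_zero.mpr hcd))
  -- common eigenvector for the Y family
  have hYcomm : ∀ (Z : Fin t → Matrix (Fin (N ^ t)) (Fin (N ^ t)) ℂ),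
      (∀ i j, i ≠ j → Z i * Z j = Z j * Z i) →
      ∀ i j, Commute ((Z i).mulVecLin) ((Z j).mulVecLin) := by
    intro Z hZ i j
    rcases eq_or_ne i j with rfl | h
    · exact Commute.refl _
    · show _ = _
      rw [Module.End.mul_eq_comp, Module.End.mul_eq_comp, ← Matrix.mulVecLin_mul,
        ← Matrix.mulVecLin_mul, hZ i j h]
  obtain ⟨v, hv, hvp⟩ :=
    exists_common_eigenvector t (fun i => (Y i).mulVecLin) (hYcomm Y hYY)
  obtain ⟨v', hv', hvp'⟩ :=
    exists_common_eigenvector t (fun i => (Y' i).mulVecLin) (hYcomm Y' hYY')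
  choose μ hμ0 using hvp
  choose μ' hμ0' using hvp'
  have hμ : ∀ i, Y i *ᵥ v = μ i • v := fun i => by
    have h := hμ0 i; rwa [Matrix.mulVecLin_apply] at h
  have hμ' : ∀ i, Y' i *ᵥ v' = μ' i • v' := fun i => by
    have h := hμ0' i; rwa [Matrix.mulVecLin_apply] at h
  have hμN : ∀ i, μ i ^ N = b i := by
    intro i
    have h1 := hpow (Y i) (μ i) v (hμ i) N
    rw [hYN i, smul_mulVec, one_mulVec] at h1
    exact hcmp _ _ v hv h1.symm
  have hμN' : ∀ i, μ' i ^ N = b i := by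
    intro i
    have h1 := hpow (Y' i) (μ' i) v' (hμ' i) N
    rw [hYN' i, smul_mulVec, one_mulVec] at h1
    exact hcmp _ _ v' hv' h1.symm
  have hμne : ∀ i, μ i ≠ 0 := by
    intro i h
    apply hb i
    rw [← hμN i, h, zero_pow (by omega : N ≠ 0)]
  have hμne' : ∀ i, μ' i ≠ 0 := by
    intro i h
    apply hb i
    rw [← hμN' i, h, zero_pow (by omega : N ≠ 0)]
  -- μ' i / μ i is an N-th root of unity, hence a power of q i
  have hroot : ∀ i, (μ' i * (μ i)⁻¹) ^ N = 1 := by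
    intro i
    rw [mul_pow, hμN' i, inv_pow, hμN i, mul_inv_cancel₀ (hb i)]
  choose m hmlt hmq using fun i => (hq i).eq_pow_of_pow_eq_one (hroot i)
  -- bases from rep_basis
  obtain ⟨e, he0, heY, heX⟩ := rep_basis hN q hq a ha X Y hrel hXX hXY hXN v hv μ hμ
  obtain ⟨f, hf0, hfY, hfX⟩ := rep_basis hN q hq a ha X' Y' hrel' hXX' hXY' hXN' v' hv' μ' hμ'
  -- align the eigenvalues of the primed family
  set k₀ : Fin t → ZMod N := fun i => (m i : ZMod N) with hk₀
  have hμalign : ∀ j, μ' j * (q j)⁻¹ ^ ((k₀ j).val) = μ j := by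
    intro j
    rw [hk₀]
    simp only
    rw [ZMod.val_cast_of_lt (hmlt j), inv_pow, hmq j, mul_inv, inv_inv,
      mul_inv_cancel_left₀ (hμne' j)]
  have hμv'' : ∀ j, Y' j *ᵥ f k₀ = μ j • f k₀ := by
    intro j
    rw [hfY k₀ j, hμalign j]
  obtain ⟨e', he0', heY', heX'⟩ :=
    rep_basis hN q hq a ha X' Y' hrel' hXX' hXY' hXN' (f k₀) (hf0 k₀) μ hμv''
  -- linear independence
  set lam : (Fin t → ZMod N) → Fin t → ℂ :=
    fun k j => μ j * (q j)⁻¹ ^ ((k j).val) with hlam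
  have hlinj : Function.Injective lam := by
    intro k k' h
    funext j
    have hj := congrFun h j
    simp only [hlam] at hj
    have h2 := mul_left_cancel₀ (hμne j) hj
    rw [inv_pow, inv_pow] at h2
    have h3 := inv_injective h2
    exact ZMod.val_injective N ((hq j).pow_inj (ZMod.val_lt _) (ZMod.val_lt _) h3)
  have hinde : LinearIndependent ℂ e := by
    refine linearIndependent_of_joint_eigen (fun i => (Y i).mulVecLin) e lam he0 ?_ hlinj
    intro k i
    rw [Matrix.mulVecLin_apply, heY k i]
  have hinde' : LinearIndependent ℂ e' := by
    refine linearIndependent_of_joint_eigen (fun i => (Y' i).mulVecLin) e' lam he0' ?_ hlinj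
    intro k i
    rw [Matrix.mulVecLin_apply, heY' k i]
  have hcard : Fintype.card (Fin t → ZMod N)
      = Module.finrank ℂ (Fin (N ^ t) → ℂ) := by
    simp [ZMod.card]
  set B := basisOfLinearIndependentOfCardEqFinrank hinde hcard with hB
  set B' := basisOfLinearIndependentOfCardEqFinrank hinde' hcard with hB'
  have hBcoe : ⇑B = e := coe_basisOfLinearIndependentOfCardEqFinrank hinde hcard
  have hBcoe' : ⇑B' = e' := coe_basisOfLinearIndependentOfCardEqFinrank hinde' hcard
  set L := B.equiv B' (Equiv.refl _) with hL
  set P := LinearMap.toMatrix' (L : (Fin (N ^ t) → ℂ) →ₗ[ℂ] (Fin (N ^ t) → ℂ)) with hP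
  have hPk : ∀ k, P *ᵥ e k = e' k := by
    intro k
    have h1 : P *ᵥ e k = Matrix.toLin' P (e k) := (Matrix.toLin'_apply _ _).symm
    rw [h1, hP, Matrix.toLin'_toMatrix']
    have h2 : e k = B k := (congrFun hBcoe k).symm
    rw [h2]
    show L (B k) = e' k
    rw [hL, Module.Basis.equiv_apply, Equiv.refl_apply]
    exact congrFun hBcoe' k
  have hPunit : IsUnit P := by
    refine isUnit_iff_exists.mpr
      ⟨LinearMap.toMatrix' (L.symm : (Fin (N ^ t) → ℂ) →ₗ[ℂ] (Fin (N ^ t) → ℂ)), ?_, ?_⟩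
    · rw [← LinearMap.toMatrix'_comp]
      simp
    · rw [← LinearMap.toMatrix'_comp]
      simp
  have hext : ∀ A₁ A₂ : Matrix (Fin (N ^ t)) (Fin (N ^ t)) ℂ,
      (∀ k, A₁ *ᵥ e k = A₂ *ᵥ e k) → A₁ = A₂ := by
    intro A₁ A₂ h
    apply Matrix.toLin'.injective
    apply B.ext
    intro k
    rw [congrFun hBcoe k, Matrix.toLin'_apply, Matrix.toLin'_apply]
    exact h k
  have hXint : ∀ i, X' i * P = P * X i := by
    intro i
    apply hext
    intro k
    rw [← mulVec_mulVec, hPk k, heX' k i, ← hPk (k + Pi.single i 1), ← mulVec_smul,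
      ← heX k i, mulVec_mulVec]
  have hYint : ∀ i, Y' i * P = P * Y i := by
    intro i
    apply hext
    intro k
    rw [← mulVec_mulVec, hPk k, heY' k i, ← hPk k, ← mulVec_smul, ← heY k i, mulVec_mulVec]
  have hPd := (Matrix.isUnit_iff_isUnit_det P).mp hPunit
  refine ⟨P, hPunit, fun i => ⟨?_, ?_⟩⟩
  · rw [← hXint i, mul_assoc, Matrix.mul_nonsing_inv _ hPd, mul_one]
  · rw [← hYint i, mul_assoc, Matrix.mul_nonsing_inv _ hPd, mul_one]
end

section
/- Let A, B, C be abelian groups, each equipped with an additive involution σ (an additive endomorphism whose square is the identity), and let f : A → B and g : B → C be group homomorphisms commuting with the involutions, such that f is injective, g is surjective, and the image of f equals the kernel of g. Assume moreover that every σ-fixed element of A can be written in the form a' + σ(a') for some a' ∈ A. Writing X⁻ = { x ∈ X : σ(x) = −x } for the (−1)-eigenspace of σ in X, the induced sequence 0 → A⁻ → B⁻ → C⁻ → 0 is exact: f restricts to an injective homomorphism A⁻ → B⁻, g restricts to a surjective homomorphism B⁻ → C⁻, and the image of A⁻ under f equals the kernel of the restriction of g to B⁻. -/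
/-- A short exact sequence `0 → A → B → C → 0` of abelian groups equipped with compatible
additive involutions induces a short exact sequence of the `(−1)`-eigenspaces
`0 → A⁻ → B⁻ → C⁻ → 0`, provided every `σ`-fixed element of `A` is of the form
`a' + σ(a')`. -/
theorem eigenspace_exact_sequence
    {A B C : Type*} [AddCommGroup A] [AddCommGroup B] [AddCommGroup C]
    (σA : A →+ A) (σB : B →+ B) (σC : C →+ C)
    (hσA : ∀ a, σA (σA a) = a) (hσB : ∀ b, σB (σB b) = b) (hσC : ∀ c, σC (σC c) = c)
    (f : A →+ B) (g : B →+ C)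
    (hfσ : ∀ a, f (σA a) = σB (f a)) (hgσ : ∀ b, g (σB b) = σC (g b))
    (hf : Function.Injective f) (hg : Function.Surjective g)
    (hexact : ∀ b, g b = 0 ↔ ∃ a, f a = b)
    (hfix : ∀ a, σA a = a → ∃ a', a = a' + σA a') :
    (∀ a, σA a = -a → σB (f a) = -(f a)) ∧
    (∀ b, σB b = -b → σC (g b) = -(g b)) ∧
    Set.InjOn f {a | σA a = -a} ∧
    (∀ c, σC c = -c → ∃ b, σB b = -b ∧ g b = c) ∧
    (∀ b, σB b = -b → (g b = 0 ↔ ∃ a, σA a = -a ∧ f a = b)) := by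
  refine ⟨fun a ha => by rw [← hfσ, ha, map_neg], fun b hb => by rw [← hgσ, hb, map_neg],
    fun a _ a' _ h => hf h, ?_, ?_⟩
  · intro c hc
    obtain ⟨b, hb⟩ := hg c
    have hker : g (b + σB b) = 0 := by
      rw [map_add, hgσ, hb, hc, add_neg_cancel]
    obtain ⟨a, ha⟩ := (hexact _).1 hker
    have hafix : σA a = a := by
      apply hf
      rw [hfσ, ha, map_add, hσB, add_comm]
    obtain ⟨a', ha'⟩ := hfix a hafix
    refine ⟨b - f a', ?_, ?_⟩
    · have : f a' + f (σA a') = b + σB b := by rw [← map_add, ← ha', ha]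
      rw [map_sub, ← hfσ]
      have : f (σA a') = b + σB b - f a' := by
        rw [← this]; abel
      rw [this]; abel
    · have : g (f a') = 0 := (hexact _).2 ⟨a', rfl⟩
      rw [map_sub, this, hb, sub_zero]
  · intro b hb
    constructor
    · intro h
      obtain ⟨a, ha⟩ := (hexact b).1 h
      refine ⟨a, ?_, ha⟩
      apply hf
      rw [hfσ, ha, hb, map_neg, ha]
    · rintro ⟨a, _, ha⟩
      exact (hexact b).2 ⟨a, ha⟩
end

section
/- Let n ≥ 1 be an integer and let M be the free ℤ-module with basis α₁, …, α_n, β₁, …, β_{n−1}. Define the ℤ-linear map σ : M → M by σ(αᵢ) = αᵢ for all i and σ(βⱼ) = −βⱼ − αⱼ − α_{j+1} for all j. Then σ is an involution (σ ∘ σ = id), and the (−1)-eigenspace M⁻ = { m ∈ M : σ(m) = −m } is a free ℤ-module with basis the n−1 elements βⱼ − σ(βⱼ) = 2βⱼ + αⱼ + α_{j+1}, for j = 1, …, n−1. -/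
/-- The free ℤ-module with basis `α₁, …, α_n` (indexed by `Sum.inl`) and
`β₁, …, β_{n-1}` (indexed by `Sum.inr`). -/
abbrev FreeAB (n : ℕ) : Type := (Fin n ⊕ Fin (n - 1)) → ℤ

/-- The basis element `αᵢ`. -/
def alphaVec (n : ℕ) (i : Fin n) : FreeAB n := Pi.single (Sum.inl i) 1

/-- The basis element `βⱼ`. -/
def betaVec (n : ℕ) (j : Fin (n - 1)) : FreeAB n := Pi.single (Sum.inr j) 1

/-- The index of `αⱼ` (for `j = 1, …, n-1`). -/
def idxLo (n : ℕ) (j : Fin (n - 1)) : Fin n := ⟨j.1, by have := j.2; omega⟩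

/-- The index of `α_{j+1}` (for `j = 1, …, n-1`). -/
def idxHi (n : ℕ) (j : Fin (n - 1)) : Fin n := ⟨j.1 + 1, by have := j.2; omega⟩

/-- The element `2βⱼ + αⱼ + α_{j+1}`. -/
def vVec (n : ℕ) (j : Fin (n - 1)) : FreeAB n :=
  2 • betaVec n j + alphaVec n (idxLo n j) + alphaVec n (idxHi n j)

lemma alpha_apply_inl (n : ℕ) (i' i : Fin n) :
    alphaVec n i' (Sum.inl i) = if i = i' then 1 else 0 := by
  simp [alphaVec, Pi.single_apply]

lemma beta_apply_inl (n : ℕ) (j : Fin (n-1)) (i : Fin n) :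
    betaVec n j (Sum.inl i) = 0 := by simp [betaVec, Pi.single_apply]

lemma beta_apply_inr (n : ℕ) (j j' : Fin (n-1)) :
    betaVec n j (Sum.inr j') = if j' = j then 1 else 0 := by
  simp [betaVec, Pi.single_apply]

def loTerm (n : ℕ) (c : Fin (n-1) → ℤ) (i : Fin n) : ℤ :=
  if h : i.1 < n - 1 then c ⟨i.1, h⟩ else 0

def hiTerm (n : ℕ) (c : Fin (n-1) → ℤ) (i : Fin n) : ℤ :=
  if h : 0 < i.1 then c ⟨i.1 - 1, by have := i.2; omega⟩ else 0

lemma sum_diag (n : ℕ) (c : Fin n → ℤ) (i : Fin n) :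
    ∑ i', c i' * alphaVec n i' (Sum.inl i) = c i := by
  simp [alpha_apply_inl, mul_ite]

lemma sum_lo (n : ℕ) (c : Fin (n-1) → ℤ) (i : Fin n) :
    ∑ j, c j * alphaVec n (idxLo n j) (Sum.inl i) = loTerm n c i := by
  unfold loTerm
  by_cases h : i.1 < n - 1
  · rw [dif_pos h, Finset.sum_eq_single ⟨i.1, h⟩]
    · have he : i = idxLo n ⟨i.1, h⟩ := Fin.ext rfl
      rw [alpha_apply_inl, if_pos he, mul_one]
    · intro b _ hb
      rw [alpha_apply_inl, if_neg, mul_zero]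
      intro he; apply hb; apply Fin.ext
      have := congrArg Fin.val he
      simpa [idxLo] using this.symm
    · simp
  · rw [dif_neg h, Finset.sum_eq_zero]
    intro j _
    rw [alpha_apply_inl, if_neg, mul_zero]
    intro he
    have h1 := congrArg Fin.val he
    have h2 := j.2
    simp [idxLo] at h1
    omega

lemma sum_hi (n : ℕ) (c : Fin (n-1) → ℤ) (i : Fin n) :
    ∑ j, c j * alphaVec n (idxHi n j) (Sum.inl i) = hiTerm n c i := by
  unfold hiTerm
  by_cases h : 0 < i.1
  · have hb : i.1 - 1 < n - 1 := by have := i.2; omega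
    rw [dif_pos h, Finset.sum_eq_single ⟨i.1 - 1, hb⟩]
    · rw [alpha_apply_inl, if_pos, mul_one]
      apply Fin.ext
      show i.1 = i.1 - 1 + 1
      omega
    · intro b _ hbne
      rw [alpha_apply_inl, if_neg, mul_zero]
      intro he; apply hbne; apply Fin.ext
      have h1 := congrArg Fin.val he
      simp [idxHi] at h1
      show b.1 = i.1 - 1
      omega
    · simp
  · rw [dif_neg h, Finset.sum_eq_zero]
    intro j _
    rw [alpha_apply_inl, if_neg, mul_zero]
    intro he
    have h1 := congrArg Fin.val he
    simp [idxHi] at h1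
    omega

lemma sum_vVec_inl (n : ℕ) (c : Fin (n-1) → ℤ) (i : Fin n) :
    ∑ j, c j * vVec n j (Sum.inl i) = loTerm n c i + hiTerm n c i := by
  have hv : ∀ j, vVec n j (Sum.inl i)
      = alphaVec n (idxLo n j) (Sum.inl i) + alphaVec n (idxHi n j) (Sum.inl i) := by
    intro j
    simp [vVec, beta_apply_inl]
  simp_rw [hv, mul_add, Finset.sum_add_distrib, sum_lo, sum_hi]

lemma sum_vVec_inr (n : ℕ) (c : Fin (n-1) → ℤ) (j' : Fin (n-1)) :
    ∑ j, c j * vVec n j (Sum.inr j') = 2 * c j' := by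
  have hv : ∀ j, vVec n j (Sum.inr j') = if j' = j then 2 else 0 := by
    intro j
    simp [vVec, beta_apply_inr, alphaVec, Pi.single_apply, mul_ite]
  simp_rw [hv, mul_ite, mul_zero]
  rw [Finset.sum_ite_eq]
  simp [mul_comm]

/-- Let `M` be the free ℤ-module with basis `α₁, …, α_n, β₁, …, β_{n-1}` and let
`σ : M → M` be the ℤ-linear map with `σ(αᵢ) = αᵢ` and `σ(βⱼ) = −βⱼ − αⱼ − α_{j+1}`.
Then `σ` is an involution and the `(−1)`-eigenspace `{m : σ(m) = −m}` is free with basis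
the `n−1` elements `βⱼ − σ(βⱼ) = 2βⱼ + αⱼ + α_{j+1}`. -/
theorem minus_eigenspace_basis (n : ℕ) (hn : 1 ≤ n)
    (σ : FreeAB n →ₗ[ℤ] FreeAB n)
    (hσα : ∀ i : Fin n, σ (alphaVec n i) = alphaVec n i)
    (hσβ : ∀ j : Fin (n - 1),
      σ (betaVec n j) = -betaVec n j - alphaVec n (idxLo n j) - alphaVec n (idxHi n j)) :
    (∀ m, σ (σ m) = m) ∧
    (∀ j : Fin (n - 1), vVec n j = betaVec n j - σ (betaVec n j)) ∧
    (∀ j : Fin (n - 1), σ (vVec n j) = -(vVec n j)) ∧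
    (∀ m : FreeAB n, σ m = -m →
      ∃! c : Fin (n - 1) → ℤ, m = ∑ j : Fin (n - 1), c j • vVec n j) := by
  have hbasis : ∀ m : FreeAB n, m = ∑ k, m k • (Pi.single k 1 : FreeAB n) := by
    intro m; funext k'
    simp [Finset.sum_apply, Pi.single_apply]
  have hσσ : ∀ m, σ (σ m) = m := by
    have hsingle : ∀ k, σ (σ (Pi.single k 1 : FreeAB n)) = Pi.single k 1 := by
      rintro (i | j)
      · show σ (σ (alphaVec n i)) = alphaVec n i
        rw [hσα, hσα]
      · show σ (σ (betaVec n j)) = betaVec n j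
        rw [hσβ, map_sub, map_sub, map_neg, hσα, hσα, hσβ]
        abel
    intro m
    conv_lhs => rw [hbasis m]
    simp only [map_sum, map_smul, hsingle]
    exact (hbasis m).symm
  have hval : ∀ j : Fin (n - 1), vVec n j = betaVec n j - σ (betaVec n j) := by
    intro j
    rw [hσβ, vVec]
    abel
  refine ⟨hσσ, hval, ?_, ?_⟩
  · intro j
    rw [hval j, map_sub, hσσ]
    abel
  · intro m hσm
    have hσsum : σ m = (∑ i, m (Sum.inl i) • alphaVec n i)
        + ∑ j, m (Sum.inr j) •
          (-betaVec n j - alphaVec n (idxLo n j) - alphaVec n (idxHi n j)) := by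
      conv_lhs => rw [hbasis m]
      rw [map_sum, Fintype.sum_sum_type]
      simp only [map_smul]
      congr 1
      · exact Finset.sum_congr rfl fun i _ => by
          rw [show (Pi.single (Sum.inl i) 1 : FreeAB n) = alphaVec n i from rfl, hσα]
      · exact Finset.sum_congr rfl fun j _ => by
          rw [show (Pi.single (Sum.inr j) 1 : FreeAB n) = betaVec n j from rfl, hσβ]
    have key : ∀ i : Fin n, 2 * m (Sum.inl i)
        = loTerm n (fun j => m (Sum.inr j)) i + hiTerm n (fun j => m (Sum.inr j)) i := by
      intro i
      have h1 : σ m (Sum.inl i) = -m (Sum.inl i) := by rw [hσm]; rfl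
      rw [hσsum] at h1
      simp only [Pi.add_apply, Finset.sum_apply, Pi.smul_apply, smul_eq_mul,
        Pi.sub_apply, Pi.neg_apply, beta_apply_inl, neg_zero, zero_sub,
        mul_sub, mul_neg, Finset.sum_sub_distrib, Finset.sum_neg_distrib] at h1
      rw [sum_diag, sum_lo, sum_hi] at h1
      linarith
    have heven : ∀ t : ℕ, ∀ ht : t < n - 1, ∃ d, m (Sum.inr ⟨t, ht⟩) = 2 * d := by
      intro t
      induction t using Nat.strong_induction_on with
      | _ t IH =>
        intro ht
        have htn : t < n := by omega
        by_cases h0 : 0 < t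
        · have hts : t - 1 < n - 1 := by omega
          obtain ⟨d, hd⟩ := IH (t - 1) (by omega) hts
          have hk : 2 * m (Sum.inl ⟨t, htn⟩)
              = m (Sum.inr ⟨t, ht⟩) + m (Sum.inr ⟨t - 1, hts⟩) := by
            have h := key ⟨t, htn⟩
            unfold loTerm hiTerm at h
            rw [dif_pos ht, dif_pos h0] at h
            exact h
          exact ⟨m (Sum.inl ⟨t, htn⟩) - d, by omega⟩
        · have hk : 2 * m (Sum.inl ⟨t, htn⟩) = m (Sum.inr ⟨t, ht⟩) + 0 := by
            have h := key ⟨t, htn⟩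
            unfold loTerm hiTerm at h
            rw [dif_pos ht, dif_neg h0] at h
            exact h
          exact ⟨m (Sum.inl ⟨t, htn⟩), by omega⟩
    have heven2 : ∀ j : Fin (n - 1), ∃ d, m (Sum.inr j) = 2 * d := fun j => heven j.1 j.2
    choose c hc using heven2
    have hrep : m = ∑ j, c j • vVec n j := by
      funext k
      have hS : (∑ j, c j • vVec n j) k = ∑ j, c j * vVec n j k := by
        simp [Finset.sum_apply]
      rw [hS]
      cases k with
      | inl i =>
        rw [sum_vVec_inl]
        have hk := key i
        have hlo : loTerm n (fun j => m (Sum.inr j)) i = 2 * loTerm n c i := by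
          unfold loTerm; split_ifs with h
          · exact hc _
          · ring
        have hhi : hiTerm n (fun j => m (Sum.inr j)) i = 2 * hiTerm n c i := by
          unfold hiTerm; split_ifs with h
          · exact hc _
          · ring
        omega
      | inr j =>
        rw [sum_vVec_inr, ← hc]
    refine ⟨c, hrep, ?_⟩
    intro y hy
    funext j
    have h1 := congrFun hy (Sum.inr j)
    have h2 : (∑ j', y j' • vVec n j') (Sum.inr j) = 2 * y j := by
      simp only [Finset.sum_apply, Pi.smul_apply, smul_eq_mul]
      exact sum_vVec_inr n y j
    have h3 := hc j
    rw [h2] at h1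
    omega
end
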